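/- arXiv:2206.11997 — 2 statements merged into one kernel-verified Lean document; each statement's English description precedes it below -/
import Mathlib

section
/- Let G be a compact metrizable group and Gₙ ≤ G closed subgroups converging to G in the Hausdorff metric on closed subsets of G (for any metric inducing the topology of G). Then the Haar probability measures of Gₙ, viewed as measures on G, converge weakly to the Haar probability measure of G. -/
/-!
A Haar probability measure on a compact group is bi-invariant, so by Fubini `∫ f dμ` is the
`μ`-average of the translates `g ↦ ∫ f (g x) dνₙ`, while `∫ f dνₙ` is the same average of the
constant `∫ f (h x) dνₙ` for any `h ∈ Gₙ`. Once `Gₙ` is `δ`-dense, every `g` has such an `h`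
within `δ`, and uniform continuity of `(g, x) ↦ f (g x)` makes the two integrands `ε`-close.
-/

open MeasureTheory Filter

open Metric in
theorem Metric.exists_dist_lt_of_hausdorffDist_univ_lt {α : Type*} [PseudoMetricSpace α]
    [BoundedSpace α] {s : Set α} (hs : s.Nonempty) {δ : ℝ}
    (h : hausdorffDist s Set.univ < δ) (x : α) : ∃ y ∈ s, dist x y < δ :=
  exists_dist_lt_of_hausdorffDist_lt (Set.mem_univ x) (hausdorffDist_comm.trans_lt h)
    (hausdorffEDist_ne_top_of_nonempty_of_bounded ⟨x, trivial⟩ hs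
      (Bornology.IsBounded.all _) (Bornology.IsBounded.all _))

theorem exists_pos_forall_dist_comp_mul_lt {G β : Type*} [Mul G] [PseudoMetricSpace G]
    [CompactSpace G] [ContinuousMul G] [PseudoMetricSpace β] (f : C(G, β)) {ε : ℝ}
    (hε : 0 < ε) : ∃ δ > 0, ∀ g h : G, dist g h < δ → ∀ x, dist (f (g * x)) (f (h * x)) < ε := by
  obtain ⟨δ, hδ, hf⟩ := Metric.uniformContinuous_iff.1
    (CompactSpace.uniformContinuous_of_continuous (f.continuous.comp continuous_mul)) ε hε
  refine ⟨δ, hδ, fun g h hgh x => hf (?_ : dist (g, x) (h, x) < δ)⟩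
  simpa [Prod.dist_eq] using hgh

theorem dist_integral_le_of_forall_dist_le {α E : Type*} [MeasurableSpace α]
    [NormedAddCommGroup E] [NormedSpace ℝ E] {μ : Measure α} [IsProbabilityMeasure μ]
    {f g : α → E} (hf : Integrable f μ) (hg : Integrable g μ) {ε : ℝ}
    (h : ∀ x, dist (f x) (g x) ≤ ε) : dist (∫ x, f x ∂μ) (∫ x, g x ∂μ) ≤ ε := by
  rw [dist_eq_norm, ← integral_sub hf hg]
  simpa using norm_integral_le_of_norm_le_const (μ := μ)
    (Eventually.of_forall fun x => (dist_eq_norm (f x) (g x)).symm.trans_le (h x))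

theorem Continuous.integrable_of_compactSpace {α E : Type*} [TopologicalSpace α] [CompactSpace α]
    [MeasurableSpace α] [OpensMeasurableSpace α] [NormedAddCommGroup E] {μ : Measure α}
    [IsFiniteMeasure μ] {f : α → E} (hf : Continuous f) : Integrable f μ :=
  hf.integrable_of_hasCompactSupport (.of_compactSpace f)

section CompactGroup

variable {G E : Type*} [Group G] [TopologicalSpace G] [IsTopologicalGroup G]
  [MeasurableSpace G] [BorelSpace G]

theorem MeasureTheory.Measure.isMulRightInvariant_of_isProbabilityMeasure [LocallyCompactSpace G]
    (μ : Measure G) [μ.IsHaarMeasure] [IsProbabilityMeasure μ] : μ.IsMulRightInvariant where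
  map_mul_right_eq_self g := by
    have : IsProbabilityMeasure (μ.map (· * g)) :=
      Measure.isProbabilityMeasure_map (measurable_mul_const g).aemeasurable
    exact Measure.isHaarMeasure_eq_of_isProbabilityMeasure _ μ

variable [SecondCountableTopology G] [NormedAddCommGroup E] [NormedSpace ℝ E]

theorem integral_map_subtype_comp_mul_left {H : Subgroup G} (ν : Measure H)
    [ν.IsMulLeftInvariant] (f : C(G, E)) {h : G} (hh : h ∈ H) :
    ∫ x, f (h * x) ∂ν.map (↑) = ∫ x, f x ∂ν.map (↑) := by
  rw [integral_map (f := fun x => f (h * x)) measurable_subtype_coe.aemeasurable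
      (f.continuous.comp (continuous_const_mul h)).aestronglyMeasurable,
    integral_map measurable_subtype_coe.aemeasurable f.continuous.aestronglyMeasurable]
  exact integral_mul_left_eq_self (fun y : H => f y) ⟨h, hh⟩

variable [CompleteSpace E] [CompactSpace G]

theorem integral_integral_comp_mul_left (μ : Measure G) [μ.IsMulRightInvariant]
    [IsFiniteMeasure μ] (ν : Measure G) [IsProbabilityMeasure ν] (f : C(G, E)) :
    ∫ g, ∫ x, f (g * x) ∂ν ∂μ = ∫ x, f x ∂μ := by
  rw [integral_integral_swap (f := fun g x => f (g * x))
    (f.continuous.comp continuous_mul).integrable_of_compactSpace]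
  simp_rw [integral_mul_right_eq_self (fun g => f g)]
  simp

theorem dist_integral_map_subtype_integral_le (μ : Measure G) [μ.IsHaarMeasure]
    [IsProbabilityMeasure μ] {H : Subgroup G} (ν : Measure H) [ν.IsMulLeftInvariant]
    [IsProbabilityMeasure ν] (f : C(G, E)) {ε : ℝ}
    (hf : ∀ g, ∃ h ∈ H, ∀ x, dist (f (g * x)) (f (h * x)) ≤ ε) :
    dist (∫ x, f x ∂ν.map (↑)) (∫ x, f x ∂μ) ≤ ε := by
  have := μ.isMulRightInvariant_of_isProbabilityMeasure
  set ν' := ν.map ((↑) : H → G)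
  have : IsProbabilityMeasure ν' :=
    Measure.isProbabilityMeasure_map measurable_subtype_coe.aemeasurable
  have hφ : Integrable (fun g => ∫ x, f (g * x) ∂ν') μ :=
    (f.continuous.comp continuous_mul).integrable_of_compactSpace.integral_prod_left
  calc dist (∫ x, f x ∂ν') (∫ x, f x ∂μ)
      = dist (∫ _, ∫ x, f x ∂ν' ∂μ) (∫ g, ∫ x, f (g * x) ∂ν' ∂μ) := by
        rw [integral_const, integral_integral_comp_mul_left]
        simp
    _ ≤ ε := by
      refine dist_integral_le_of_forall_dist_le (integrable_const _) hφ fun g => ?_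
      obtain ⟨h, hh, hgh⟩ := hf g
      rw [← integral_map_subtype_comp_mul_left ν f hh]
      exact dist_integral_le_of_forall_dist_le
        (f.continuous.comp (continuous_const_mul h)).integrable_of_compactSpace
        (f.continuous.comp (continuous_const_mul g)).integrable_of_compactSpace
        fun x => (dist_comm _ _).trans_le (hgh x)

end CompactGroup

theorem stmt8_general {G : Type*} [Group G] [MetricSpace G] [CompactSpace G]
    [IsTopologicalGroup G] [MeasurableSpace G] [BorelSpace G]
    (μG : Measure G) [μG.IsHaarMeasure] [IsProbabilityMeasure μG]
    (Gn : ℕ → Subgroup G)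
    (hconv : Tendsto (fun n => Metric.hausdorffDist ((Gn n : Set G)) (Set.univ : Set G))
      atTop (nhds 0))
    (μn : ∀ n, Measure (Gn n)) [∀ n, (μn n).IsHaarMeasure]
    [∀ n, IsProbabilityMeasure (μn n)] :
    ∀ f : C(G, ℝ),
      Tendsto (fun n => ∫ x, f x ∂(Measure.map ((↑) : Gn n → G) (μn n))) atTop
        (nhds (∫ x, f x ∂μG)) := by
  intro f
  refine Metric.tendsto_atTop.2 fun ε hε => ?_
  obtain ⟨δ, hδ, hf⟩ := exists_pos_forall_dist_comp_mul_lt f (half_pos hε)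
  obtain ⟨N, hN⟩ := Metric.tendsto_atTop.1 hconv δ hδ
  refine ⟨N, fun n hn => (dist_integral_map_subtype_integral_le μG (μn n) f fun g => ?_).trans_lt
    (half_lt_self hε)⟩
  have hδn : Metric.hausdorffDist (Gn n : Set G) Set.univ < δ := by
    simpa [abs_of_nonneg Metric.hausdorffDist_nonneg] using hN n hn
  obtain ⟨h, hh, hgh⟩ := Metric.exists_dist_lt_of_hausdorffDist_univ_lt ⟨1, (Gn n).one_mem⟩ hδn g
  exact ⟨h, hh, fun x => (hf g h hgh x).le⟩

/-- if closed subgroups `Gₙ` of a compact metrizable group `G`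
converge to `G` in the Hausdorff metric, then their Haar probability measures
(pushed forward to `G`) converge weakly to the Haar probability measure of `G`. -/
theorem stmt8 {G : Type*} [Group G] [MetricSpace G] [CompactSpace G]
    [IsTopologicalGroup G] [MeasurableSpace G] [BorelSpace G]
    (μG : Measure G) [μG.IsHaarMeasure] [IsProbabilityMeasure μG]
    (Gn : ℕ → Subgroup G) (hclosed : ∀ n, IsClosed (Gn n : Set G))
    (hconv : Tendsto (fun n => Metric.hausdorffDist ((Gn n : Set G)) (Set.univ : Set G))
      atTop (nhds 0))
    (μn : ∀ n, Measure (Gn n)) [∀ n, (μn n).IsHaarMeasure]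
    [∀ n, IsProbabilityMeasure (μn n)] :
    ∀ f : C(G, ℝ),
      Tendsto (fun n => ∫ x, f x ∂(Measure.map ((↑) : Gn n → G) (μn n))) atTop
        (nhds (∫ x, f x ∂μG)) :=
  stmt8_general μG Gn hconv μn
end

section
/- The circle group S¹ is not image-rigid: the images of the homomorphisms φₙ : S¹ → T², z ↦ (z, zⁿ), converge in the Hausdorff metric on closed subgroups of the 2-torus T² to all of T², but T² is not the image of any continuous homomorphism S¹ → T². -/
open Filter Real

/-!
Given `(a, b) ∈ T²`, multiplying `a` by an `n`-th root of `b a⁻ⁿ` of argument at most `π / n`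
gives a point `z` with `zⁿ = b` and `dist z a ≤ π / n`, so the graph of `z ↦ zⁿ` is
`π / n`-dense in `T²`.

A closed subgroup of `S¹` is finite or everything: its preimage under `t ↦ exp (i t)` is a
closed subgroup of `ℝ`, hence either dense or cyclic. For a continuous surjective
`φ : S¹ → T²`, the kernel of its first coordinate cannot be everything, since that coordinate is
onto, nor finite, since the second coordinate maps the kernel onto `S¹`.
-/

namespace Circle

lemma dist_eq_norm_coe_sub (x y : Circle) : dist x y = ‖(x : ℂ) - y‖ :=
  Complex.dist_eq (x : ℂ) y

lemma dist_mul_left (a x y : Circle) : dist (a * x) (a * y) = dist x y := by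
  simp only [dist_eq_norm_coe_sub, coe_mul, ← mul_sub, norm_mul, norm_coe, one_mul]

lemma dist_exp_one_le (t : ℝ) : dist (exp t) 1 ≤ |t| := by
  simpa [dist_eq_norm_coe_sub, mul_comm] using
    Real.norm_exp_I_mul_ofReal_sub_one_le (x := t)

lemma exists_pow_eq_dist_le_pi_div (a b : Circle) {n : ℕ} (hn : n ≠ 0) :
    ∃ z : Circle, z ^ n = b ∧ dist z a ≤ π / n := by
  set θ := Complex.arg (b * (a ^ n)⁻¹ : Circle)
  refine ⟨a * exp (θ / n), ?_, ?_⟩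
  · rw [mul_pow, ← exp_nsmul, nsmul_eq_mul, mul_div_cancel₀ _ (by positivity), exp_arg]
    exact mul_inv_cancel_comm_assoc _ b
  · calc dist (a * exp (θ / n)) a = dist (exp (θ / n)) 1 := by
          rw [← dist_mul_left a _ 1, mul_one]
      _ ≤ |θ / n| := dist_exp_one_le _
      _ ≤ π / n := by
          rw [abs_div, Nat.abs_cast]
          gcongr
          exact Complex.abs_arg_le_pi _

lemma hausdorffDist_range_graph_pow_le {n : ℕ} (hn : n ≠ 0) :
    Metric.hausdorffDist (Set.range fun z : Circle => (z, z ^ n)) Set.univ ≤ π / n := by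
  refine Metric.hausdorffDist_le_of_mem_dist (by positivity)
    (fun p _ => ⟨p, Set.mem_univ p, by simpa using by positivity⟩) ?_
  rintro ⟨a, b⟩ -
  obtain ⟨z, rfl, hz⟩ := exists_pow_eq_dist_le_pi_div a b hn
  refine ⟨(z, z ^ n), Set.mem_range_self z, ?_⟩
  rw [Prod.dist_eq, dist_self, dist_comm]
  exact max_le hz (by positivity)

lemma tendsto_hausdorffDist_range_graph_pow :
    Tendsto (fun n : ℕ => Metric.hausdorffDist (Set.range fun z : Circle => (z, z ^ n)) Set.univ)
      atTop (nhds 0) :=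
  tendsto_of_tendsto_of_tendsto_of_le_of_le' tendsto_const_nhds
    (tendsto_const_div_atTop_nhds_zero_nat π)
    (Eventually.of_forall fun _ => Metric.hausdorffDist_nonneg)
    ((eventually_ne_atTop 0).mono fun _ => hausdorffDist_range_graph_pow_le)

instance : Infinite Circle :=
  Set.infinite_univ_iff.mp <| ((Set.Ico_infinite two_pi_pos).image
    (exp_injOn_Ico (sub_zero _).le)).mono (Set.subset_univ _)

lemma finite_or_eq_top_of_isClosed {K : Subgroup Circle} (hK : IsClosed (K : Set Circle)) :
    (K : Set Circle).Finite ∨ K = ⊤ := by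
  let S : AddSubgroup ℝ := K.toAddSubgroup.comap expHom
  have hS : (S : Set ℝ) = exp ⁻¹' K := rfl
  have hargS (z : Circle) (hz : z ∈ K) : Complex.arg z ∈ S := by
    rwa [← SetLike.mem_coe, hS, Set.mem_preimage, exp_arg]
  rcases S.dense_or_cyclic with hdense | ⟨a, ha⟩
  · have hSuniv : (S : Set ℝ) = Set.univ := by
      have hSclosed : IsClosed (S : Set ℝ) := hK.preimage exp.continuous
      rw [← hdense.closure_eq, hSclosed.closure_eq]
    refine Or.inr (eq_top_iff.2 fun z _ => ?_)
    have : Complex.arg z ∈ (S : Set ℝ) := hSuniv ▸ Set.mem_univ _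
    rwa [hS, Set.mem_preimage, exp_arg] at this
  · left
    have h2π : 2 * π ∈ S := by
      rw [← SetLike.mem_coe, hS, Set.mem_preimage, exp_two_pi]
      exact K.one_mem
    obtain ⟨m, hm⟩ := AddSubgroup.mem_closure_singleton.1 (ha ▸ h2π)
    have hfin : IsOfFinOrder (exp a) := by
      refine isOfFinOrder_iff_zpow_eq_one.2 ⟨m, ?_, by rw [← exp_zsmul, hm, exp_two_pi]⟩
      rintro rfl
      simp [pi_ne_zero] at hm
    refine hfin.finite_zpowers.subset fun z hz => ?_
    obtain ⟨k, hk⟩ := AddSubgroup.mem_closure_singleton.1 (ha ▸ hargS z hz)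
    exact ⟨k, show exp a ^ k = z by rw [← exp_zsmul, hk, exp_arg]⟩

end Circle

theorem MonoidHom.not_surjective_prod_of_forall_isClosed_finite_or_eq_top
    {G H₁ H₂ : Type*} [Group G] [TopologicalSpace G] [Group H₁] [TopologicalSpace H₁] [T1Space H₁]
    [Nontrivial H₁] [Group H₂] [TopologicalSpace H₂] [Infinite H₂]
    (hG : ∀ K : Subgroup G, IsClosed (K : Set G) → (K : Set G).Finite ∨ K = ⊤)
    (φ : G →* H₁ × H₂) (hφ : Continuous φ) : ¬ Function.Surjective φ := by
  intro hsurj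
  let L := ((MonoidHom.fst H₁ H₂).comp φ).ker
  have hL : IsClosed (L : Set G) := isClosed_singleton.preimage (continuous_fst.comp hφ)
  rcases hG L hL with hfin | htop
  · refine Set.infinite_univ (α := H₂) ((hfin.image fun x => (φ x).2).subset fun b _ => ?_)
    obtain ⟨x, hx⟩ := hsurj (1, b)
    exact ⟨x, by simp [L, hx], by simp [hx]⟩
  · obtain ⟨h, hh⟩ := exists_ne (1 : H₁)
    obtain ⟨x, hx⟩ := hsurj (h, 1)
    have : x ∈ L := htop ▸ Subgroup.mem_top x
    simp [L, hx, hh] at this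

/-- the circle is not image-rigid: the images of `z ↦ (z, zⁿ)`
converge in the Hausdorff metric to the whole 2-torus `T² = S¹ × S¹`, yet `T²` is
not the image of any continuous homomorphism from `S¹`. -/
theorem stmt15 :
    Tendsto
      (fun n : ℕ => Metric.hausdorffDist
        (Set.range fun z : Circle => ((z, z ^ n) : Circle × Circle))
        (Set.univ : Set (Circle × Circle)))
      atTop (nhds 0) ∧
    ¬ ∃ φ : Circle →* Circle × Circle, Continuous φ ∧ Function.Surjective φ :=
  ⟨Circle.tendsto_hausdorffDist_range_graph_pow, fun ⟨φ, hφ, hsurj⟩ =>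
    MonoidHom.not_surjective_prod_of_forall_isClosed_finite_or_eq_top
      (fun _ => Circle.finite_or_eq_top_of_isClosed) φ hφ hsurj⟩
end
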